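/- arXiv:2203.02368 — 3 statements merged into one kernel-verified Lean document; each statement's English description precedes it below -/
import Mathlib

section
/- Let X be a real locally convex space and let B ⊆ X be a bounded Rosenthal subset, i.e. every sequence in B has a weak Cauchy subsequence. Then B is Mackey tame: for every weak-star compact subset M ⊆ X* (not necessarily equicontinuous), B is a tame family of functions on M (where b ∈ B acts on M by φ ↦ φ(b)). -/
open Filter Topology

/-- A sequence of real-valued functions is (combinatorially) independent. -/
def IndepSeq {X : Type*} (f : ℕ → X → ℝ) : Prop :=
  ∃ a b : ℝ, a < b ∧ ∀ P M : Finset ℕ, Disjoint P M →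
    ∃ x : X, (∀ n ∈ P, f n x < a) ∧ (∀ n ∈ M, b < f n x)

/-- A family of real-valued functions is tame if it contains no independent sequence. -/
def IsTameFamily {X : Type*} (F : Set (X → ℝ)) : Prop :=
  ¬ ∃ f : ℕ → X → ℝ, (∀ n, f n ∈ F) ∧ IndepSeq f

variable {E : Type*} [AddCommGroup E] [Module ℝ E] [TopologicalSpace E]

/-- The family of functions on `M ⊆ E*` obtained by evaluating the elements of `B ⊆ E`. -/
def evalFamily (B : Set E) (M : Set (WeakDual ℝ E)) : Set (M → ℝ) :=
  {g | ∃ b ∈ B, g = fun φ : M => (φ : WeakDual ℝ E) b}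

/-- A sequence is weak Cauchy if `(φ (x n))` converges for every continuous functional `φ`. -/
def IsWeakCauchy (x : ℕ → E) : Prop :=
  ∀ φ : E →L[ℝ] ℝ, ∃ l : ℝ, Tendsto (fun n => φ (x n)) atTop (𝓝 l)

/-! An independent sequence of continuous functions on a compact space has, by the finite
intersection property, a point at which its even terms stay `≤ a` and its odd terms `≥ b`,
so it does not converge there. Independence passes to subsequences, so no subsequence of an
independent sequence of evaluations `φ ↦ φ (x n)` on a weak-star compact `M` converges
pointwise on `M`, whereas a Rosenthal set provides a weak Cauchy subsequence. -/

namespace IndepSeq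

variable {X : Type*} {f : ℕ → X → ℝ}

theorem comp_strictMono (hf : IndepSeq f) {ψ : ℕ → ℕ} (hψ : StrictMono ψ) :
    IndepSeq fun n => f (ψ n) := by
  obtain ⟨a, b, hab, hind⟩ := hf
  refine ⟨a, b, hab, fun P M hPM => ?_⟩
  obtain ⟨x, hxP, hxM⟩ :=
    hind (P.image ψ) (M.image ψ) ((Finset.disjoint_image hψ.injective).2 hPM)
  exact ⟨x, fun n hn => hxP _ (Finset.mem_image_of_mem ψ hn),
    fun n hn => hxM _ (Finset.mem_image_of_mem ψ hn)⟩

theorem exists_not_tendsto [TopologicalSpace X] [CompactSpace X] (hf : IndepSeq f)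
    (hcont : ∀ n, Continuous (f n)) :
    ∃ x, ∀ l, ¬ Tendsto (fun n => f n x) atTop (𝓝 l) := by
  obtain ⟨a, b, hab, hind⟩ := hf
  let C : ℕ → Set X := fun k => {x | f (2 * k) x ≤ a ∧ b ≤ f (2 * k + 1) x}
  have hC_closed (k : ℕ) : IsClosed (C k) :=
    (isClosed_le (hcont _) continuous_const).inter (isClosed_le continuous_const (hcont _))
  have hC_finite (u : Finset ℕ) : (⋂ k ∈ u, C k).Nonempty := by
    have hdisj : Disjoint (u.image (2 * ·)) (u.image (2 * · + 1)) := by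
      simp only [Finset.disjoint_left, Finset.mem_image]
      omega
    obtain ⟨x, hxP, hxM⟩ := hind _ _ hdisj
    refine ⟨x, Set.mem_iInter₂.2 fun k hk => ⟨?_, ?_⟩⟩
    · exact (hxP _ (Finset.mem_image_of_mem _ hk)).le
    · exact (hxM _ (Finset.mem_image_of_mem _ hk)).le
  obtain ⟨x, hx⟩ := isCompact_univ.inter_iInter_nonempty C hC_closed fun u => by
    simpa using hC_finite u
  have hxC : ∀ k, x ∈ C k := Set.mem_iInter.1 hx.2
  refine ⟨x, fun l hl => ?_⟩
  have hla : l ≤ a := le_of_tendsto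
    (hl.comp (strictMono_mul_left_of_pos two_pos).tendsto_atTop)
    (Eventually.of_forall fun k => (hxC k).1)
  have hbl : b ≤ l := ge_of_tendsto
    (hl.comp (strictMono_mul_left_of_pos two_pos |>.add_const 1).tendsto_atTop)
    (Eventually.of_forall fun k => (hxC k).2)
  linarith

end IndepSeq

theorem rosenthal_subset_is_mackey_tame_general
    {X : Type*} [AddCommGroup X] [Module ℝ X] [TopologicalSpace X]
    (B : Set X)
    (hRos : ∀ x : ℕ → X, (∀ n, x n ∈ B) →
      ∃ ψ : ℕ → ℕ, StrictMono ψ ∧ IsWeakCauchy (x ∘ ψ)) :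
    ∀ M : Set (WeakDual ℝ X), IsCompact M → IsTameFamily (evalFamily B M) := by
  intro M hM ⟨f, hfB, hind⟩
  choose x hxB hfx using hfB
  obtain rfl : f = fun n (φ : M) => (φ : WeakDual ℝ X) (x n) := funext hfx
  obtain ⟨ψ, hψ, hcauchy⟩ := hRos x hxB
  have : CompactSpace M := isCompact_iff_compactSpace.1 hM
  obtain ⟨φ, hφ⟩ := (hind.comp_strictMono hψ).exists_not_tendsto fun n =>
    (WeakDual.eval_continuous (x (ψ n))).comp continuous_subtype_val
  obtain ⟨l, hl⟩ := hcauchy (φ : WeakDual ℝ X)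
  exact hφ l hl

/-- If `B` is a bounded Rosenthal subset of a real locally convex space `X`
(every sequence in `B` has a weak Cauchy subsequence), then `B` is Mackey tame: for every
weak-star compact `M ⊆ X*` (not necessarily equicontinuous), `B` is a tame family of
functions on `M`. -/
theorem rosenthal_subset_is_mackey_tame
    {X : Type*} [AddCommGroup X] [Module ℝ X] [TopologicalSpace X]
    [IsTopologicalAddGroup X] [ContinuousSMul ℝ X] [LocallyConvexSpace ℝ X]
    (B : Set X) (hB : Bornology.IsVonNBounded ℝ B)
    (hRos : ∀ x : ℕ → X, (∀ n, x n ∈ B) →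
      ∃ ψ : ℕ → ℕ, StrictMono ψ ∧ IsWeakCauchy (x ∘ ψ)) :
    ∀ M : Set (WeakDual ℝ X), IsCompact M → IsTameFamily (evalFamily B M) :=
  rosenthal_subset_is_mackey_tame_general B hRos
end

section
/- Let X ⊆ l¹ be the normed subspace consisting of all finitely supported sequences (with the norm inherited from l¹). Then the standard unit vector basis (e_n) is an l¹-sequence in X, but there exists no continuous linear topological embedding of l¹ into X. Hence a normed space may contain no isomorphic copy of l¹ while still containing a bounded l¹-sequence. -/
open Filter Topology

/-- The Banach space `l¹` of absolutely summable real sequences. -/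
noncomputable abbrev ellOne : Type := ↥(lp (fun _ : ℕ => ℝ) 1)

/-- The standard unit vector basis of `l¹`. -/
noncomputable def stdBasis (n : ℕ) : ellOne := lp.single 1 n (1 : ℝ)

/-- A sequence in a locally convex (e.g. normed) space is an `l¹`-sequence. -/
def IsL1Seq {E : Type*} [AddCommGroup E] [Module ℝ E] [TopologicalSpace E]
    (x : ℕ → E) : Prop :=
  ∃ ρ : Seminorm ℝ E, Continuous ρ ∧ ∃ δ : ℝ, 0 < δ ∧
    ∀ (n : ℕ) (c : ℕ → ℝ),
      δ * ∑ i ∈ Finset.range n, |c i| ≤ ρ (∑ i ∈ Finset.range n, c i • x i)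

/-- The normed subspace of `l¹` of all finitely supported sequences. -/
noncomputable def finSupp : Submodule ℝ ellOne where
  carrier := {α | ∃ N : ℕ, ∀ n, N ≤ n → α n = 0}
  zero_mem' := ⟨0, fun n _ => rfl⟩
  add_mem' := by
    rintro a b ⟨N, hN⟩ ⟨M, hM⟩
    refine ⟨max N M, fun n hn => ?_⟩
    have h : (a + b) n = a n + b n := rfl
    rw [h, hN n (le_trans (le_max_left _ _) hn), hM n (le_trans (le_max_right _ _) hn),
      add_zero]
  smul_mem' := by
    rintro c a ⟨N, hN⟩
    refine ⟨N, fun n hn => ?_⟩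
    have h : (c • a) n = c * a n := rfl
    rw [h, hN n hn, mul_zero]

theorem stdBasis_mem_finSupp (n : ℕ) : stdBasis n ∈ finSupp := by
  refine ⟨n + 1, fun m hm => ?_⟩
  have h : (stdBasis n) m = if m = n then (1 : ℝ) else 0 := by
    rw [stdBasis, lp.single_apply]
    simp [Pi.single_apply]
  rw [h, if_neg (by omega)]

/-!
On finite combinations of unit vectors the `l¹` norm is exactly `Σ |cᵢ|`, so the unit vectors
form an `l¹`-sequence for the norm of `X`. On the other hand `X` is the countable union of the
finite-dimensional subspaces `V N` of sequences vanishing from `N` on. If `φ : l¹ → X` were a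
continuous linear injection, the closed subspaces `φ⁻¹(V N)` would cover the Banach space `l¹`,
so by Baire one of them has interior and hence is all of `l¹`; then `l¹` would inject linearly
into the finite-dimensional `V N`, which the linearly independent unit vectors forbid.
-/

theorem IsL1Seq.of_le_norm {E : Type*} [SeminormedAddCommGroup E] [NormedSpace ℝ E]
    {x : ℕ → E} {δ : ℝ} (hδ : 0 < δ)
    (h : ∀ (n : ℕ) (c : ℕ → ℝ),
      δ * ∑ i ∈ Finset.range n, |c i| ≤ ‖∑ i ∈ Finset.range n, c i • x i‖) :
    IsL1Seq x :=
  ⟨normSeminorm ℝ E, continuous_norm, δ, hδ, h⟩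

theorem norm_sum_smul_stdBasis (s : Finset ℕ) (c : ℕ → ℝ) :
    ‖∑ i ∈ s, c i • stdBasis i‖ = ∑ i ∈ s, |c i| := by
  have := lp.norm_sum_single (p := 1) (by norm_num) c s
  simp only [ENNReal.toReal_one, Real.rpow_one, Real.norm_eq_abs] at this
  simpa [stdBasis, ← lp.single_smul] using this

theorem linearIndependent_stdBasis : LinearIndependent ℝ stdBasis := by
  refine .of_comp (LinearMap.pi fun i => lp.evalₗ (𝕜 := ℝ) (fun _ : ℕ => ℝ) 1 i) ?_
  have h : (LinearMap.pi fun i => lp.evalₗ (𝕜 := ℝ) (fun _ : ℕ => ℝ) 1 i) ∘ stdBasis =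
      fun n => Pi.single n (1 : ℝ) := by
    funext n m
    simp [stdBasis, lp.single_apply]
  rw [h]
  exact Pi.linearIndependent_single_one ℕ ℝ

theorem not_finiteDimensional_ellOne : ¬ FiniteDimensional ℝ ellOne :=
  fun _ => Module.Finite.not_linearIndependent_of_infinite _ linearIndependent_stdBasis

section Baire

variable {𝕜 E F : Type*} [NontriviallyNormedField 𝕜] [CompleteSpace 𝕜]
  [AddCommGroup E] [TopologicalSpace E] [ContinuousAdd E] [Module 𝕜 E]
  [ContinuousSMul 𝕜 E] [BaireSpace E]
  [AddCommGroup F] [TopologicalSpace F] [IsTopologicalAddGroup F] [Module 𝕜 F]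
  [ContinuousSMul 𝕜 F] [T2Space F]

theorem ContinuousLinearMap.exists_forall_mem_of_forall_mem_iUnion (f : E →L[𝕜] F)
    (V : ℕ → Submodule 𝕜 F) [∀ n, FiniteDimensional 𝕜 (V n)] (hf : ∀ x, ∃ n, f x ∈ V n) :
    ∃ n, ∀ x, f x ∈ V n := by
  have hclosed : ∀ n, IsClosed ((V n).comap (f : E →ₗ[𝕜] F) : Set E) :=
    fun n => (V n).closed_of_finiteDimensional.preimage f.continuous
  have hcover : ⋃ n, ((V n).comap (f : E →ₗ[𝕜] F) : Set E) = Set.univ :=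
    Set.iUnion_eq_univ_iff.2 hf
  obtain ⟨n, hn⟩ := nonempty_interior_of_iUnion_of_closed hclosed hcover
  exact ⟨n, Submodule.eq_top_iff'.1 (Submodule.eq_top_of_nonempty_interior' _ hn)⟩

theorem FiniteDimensional.of_injective_of_forall_mem_iUnion (f : E →L[𝕜] F)
    (hf_inj : Function.Injective f) (V : ℕ → Submodule 𝕜 F) [∀ n, FiniteDimensional 𝕜 (V n)]
    (hf : ∀ x, ∃ n, f x ∈ V n) : FiniteDimensional 𝕜 E := by
  obtain ⟨n, hn⟩ := f.exists_forall_mem_of_forall_mem_iUnion V hf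
  exact .of_injective ((f : E →ₗ[𝕜] F).codRestrict (V n) hn)
    fun x y h => hf_inj (congrArg Subtype.val h)

end Baire

noncomputable def vanishingFrom (p : ENNReal) (N : ℕ) : Submodule ℝ (lp (fun _ : ℕ => ℝ) p) :=
  ⨅ m ≥ N, LinearMap.ker (lp.evalₗ _ p m)

theorem mem_vanishingFrom {p : ENNReal} {N : ℕ} {x : lp (fun _ : ℕ => ℝ) p} :
    x ∈ vanishingFrom p N ↔ ∀ m, N ≤ m → x m = 0 := by
  simp [vanishingFrom, Submodule.mem_iInf]

instance (p : ENNReal) (N : ℕ) : FiniteDimensional ℝ (vanishingFrom p N) := by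
  refine .of_injective (LinearMap.pi fun i : Fin N =>
    (lp.evalₗ (𝕜 := ℝ) (fun _ : ℕ => ℝ) p i).comp (vanishingFrom p N).subtype) fun x y hxy => ?_
  ext m
  obtain hm | hm := lt_or_ge m N
  · exact congrFun hxy ⟨m, hm⟩
  · rw [mem_vanishingFrom.1 x.2 m hm, mem_vanishingFrom.1 y.2 m hm]

theorem exists_mem_vanishingFrom_of_mem_finSupp {x : ellOne} (hx : x ∈ finSupp) :
    ∃ N, x ∈ vanishingFrom 1 N :=
  let ⟨N, hN⟩ := hx
  ⟨N, mem_vanishingFrom.2 hN⟩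

/-- In the normed space `X ⊆ l¹` of finitely supported sequences, the
standard unit vectors form an `l¹`-sequence, yet there is no continuous linear topological
embedding of `l¹` into `X`.  Hence a normed space may contain no isomorphic copy of `l¹`
while still containing a bounded `l¹`-sequence. -/
theorem finSupp_has_l1_sequence_but_no_l1_copy :
    IsL1Seq (fun n => (⟨stdBasis n, stdBasis_mem_finSupp n⟩ : finSupp)) ∧
    ¬ ∃ φ : ellOne →L[ℝ] finSupp, IsEmbedding φ := by
  refine ⟨.of_le_norm one_pos fun n c => ?_, ?_⟩
  · rw [one_mul, Submodule.coe_norm, Submodule.coe_sum]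
    simp only [Submodule.coe_smul]
    rw [norm_sum_smul_stdBasis]
  · rintro ⟨φ, hφ⟩
    exact not_finiteDimensional_ellOne <| .of_injective_of_forall_mem_iUnion
      (finSupp.subtypeL ∘L φ) (Subtype.val_injective.comp hφ.injective) (vanishingFrom 1)
      fun x => exists_mem_vanishingFrom_of_mem_finSupp (φ x).2
end

section
/- Let K be a compact Hausdorff space, let (A_n)_{n∈ℕ} be a sequence of families of bounded real-valued functions on K, and let B denote the closed unit ball of C(K) (continuous functions with sup-norm at most 1). Define A := ⋂_{n∈ℕ} (A_n + 2^{-n}·B), where A_n + 2^{-n}B = {f + 2^{-n}g : f ∈ A_n, g ∈ B}. If every A_n is a fragmented family of functions on K, then A is a fragmented family; if every A_n is an eventually fragmented family, then A is eventually fragmented. -/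
/-!
A function of `⋂ₙ (Aₙ + 2⁻ⁿB)` lies uniformly within `2⁻ⁿ` of a member of `Aₙ`, and such a
perturbation raises oscillations by at most `2·2⁻ⁿ`; so fragmentation at scale `ε` is
inherited from `Aₙ` once `2⁻ⁿ < ε/4`. For eventual fragmentation, a diagonal subsequence is
chosen whose tail, for every `n`, runs inside a subsequence along which the `Aₙ`-components
are fragmented; the finitely many remaining terms do no harm, because finite subfamilies of
an eventually fragmented family are fragmented.
-/

open Filter Topology

/-- A family of real-valued functions on a topological space is fragmented if every
nonempty subset has a relatively nonempty open piece on which every member of the family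
has oscillation `< ε`. -/
def IsFragmentedFamily {K : Type*} [TopologicalSpace K] (F : Set (K → ℝ)) : Prop :=
  ∀ A : Set K, A.Nonempty → ∀ ε : ℝ, 0 < ε → ∃ O : Set K, IsOpen O ∧
    (O ∩ A).Nonempty ∧ ∀ f ∈ F, ∀ x ∈ O ∩ A, ∀ y ∈ O ∩ A, |f x - f y| < ε

/-- A family is eventually fragmented if every sequence in it has a subsequence which is a
fragmented family. -/
def IsEventuallyFragmented {K : Type*} [TopologicalSpace K] (F : Set (K → ℝ)) : Prop :=
  ∀ f : ℕ → K → ℝ, (∀ n, f n ∈ F) →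
    ∃ ψ : ℕ → ℕ, StrictMono ψ ∧ IsFragmentedFamily (Set.range (fun k => f (ψ k)))

theorem exists_strictMono_forall_ge_mem_range (P : ℕ → (ℕ → ℕ) → Prop)
    (h : ∀ n (s : ℕ → ℕ), ∃ ψ : ℕ → ℕ, StrictMono ψ ∧ P n (s ∘ ψ)) :
    ∃ φ : ℕ → ℕ, StrictMono φ ∧
      ∀ n, ∃ s : ℕ → ℕ, P n s ∧ ∀ k, n ≤ k → φ k ∈ Set.range s := by
  choose Ψ hΨ hP using h
  let σ : ℕ → ℕ → ℕ := fun n => Nat.rec (Ψ 0 id) (fun m σm => σm ∘ Ψ (m + 1) σm) n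
  have hσ_mono : ∀ n, StrictMono (σ n) := by
    intro n
    induction n with
    | zero => exact hΨ 0 id
    | succ m ih => exact ih.comp (hΨ (m + 1) (σ m))
  have hσ_range : ∀ n j, Set.range (σ (n + j)) ⊆ Set.range (σ n) := by
    intro n j
    induction j with
    | zero => exact subset_rfl
    | succ j ih => exact (Set.range_comp_subset_range _ _).trans ih
  refine ⟨fun k => σ k k, strictMono_nat_of_lt_succ fun k => ?_, fun n => ⟨σ n, ?_, ?_⟩⟩
  · calc σ k k ≤ σ k (Ψ (k + 1) (σ k) k) := (hσ_mono k).monotone (hΨ (k + 1) (σ k)).le_apply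
      _ < σ (k + 1) (k + 1) := (hσ_mono (k + 1)) k.lt_succ_self
  · cases n with
    | zero => exact hP 0 id
    | succ m => exact hP (m + 1) (σ m)
  · intro k hk
    obtain ⟨j, rfl⟩ := Nat.exists_eq_add_of_le hk
    exact hσ_range n j ⟨n + j, rfl⟩

section Fragmented

variable {K : Type*} [TopologicalSpace K]

theorem isFragmentedFamily_empty : IsFragmentedFamily (∅ : Set (K → ℝ)) :=
  fun _ hA _ _ => ⟨Set.univ, isOpen_univ, by simpa using hA, fun _ hf => hf.elim⟩

theorem IsFragmentedFamily.mono {F G : Set (K → ℝ)} (hG : IsFragmentedFamily G)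
    (hFG : F ⊆ G) : IsFragmentedFamily F := by
  intro T hT ε hε
  obtain ⟨O, hO, hne, hosc⟩ := hG T hT ε hε
  exact ⟨O, hO, hne, fun f hf => hosc f (hFG hf)⟩

theorem IsFragmentedFamily.union {F G : Set (K → ℝ)} (hF : IsFragmentedFamily F)
    (hG : IsFragmentedFamily G) : IsFragmentedFamily (F ∪ G) := by
  intro T hT ε hε
  obtain ⟨O₁, hO₁, hne₁, h₁⟩ := hF T hT ε hε
  obtain ⟨O₂, hO₂, ⟨x, hxO₂, hxO₁, hxT⟩, h₂⟩ := hG (O₁ ∩ T) hne₁ ε hε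
  refine ⟨O₁ ∩ O₂, hO₁.inter hO₂, ⟨x, ⟨hxO₁, hxO₂⟩, hxT⟩, ?_⟩
  rintro f (hf | hf) x ⟨⟨hx₁, hx₂⟩, hxT⟩ y ⟨⟨hy₁, hy₂⟩, hyT⟩
  · exact h₁ f hf x ⟨hx₁, hxT⟩ y ⟨hy₁, hyT⟩
  · exact h₂ f hf x ⟨hx₂, hx₁, hxT⟩ y ⟨hy₂, hy₁, hyT⟩

theorem IsEventuallyFragmented.isFragmentedFamily_singleton {F : Set (K → ℝ)}
    (hF : IsEventuallyFragmented F) {f : K → ℝ} (hf : f ∈ F) : IsFragmentedFamily {f} := by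
  obtain ⟨ψ, -, hψ⟩ := hF (fun _ => f) fun _ => hf
  simpa only [Set.range_const] using hψ

theorem IsEventuallyFragmented.isFragmentedFamily_of_finite {F S : Set (K → ℝ)}
    (hF : IsEventuallyFragmented F) (hSF : S ⊆ F) (hS : S.Finite) : IsFragmentedFamily S := by
  induction S, hS using Set.Finite.induction_on with
  | empty => exact isFragmentedFamily_empty
  | @insert f t _ _ ih =>
    obtain ⟨hf, htF⟩ := Set.insert_subset_iff.mp hSF
    rw [Set.insert_eq]
    exact (hF.isFragmentedFamily_singleton hf).union (ih htF)

theorem IsEventuallyFragmented.isFragmentedFamily_range {F S : Set (K → ℝ)}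
    (hF : IsEventuallyFragmented F) (hS : IsFragmentedFamily S) {u : ℕ → K → ℝ}
    (hu : ∀ k, u k ∈ F) {n : ℕ} (huS : ∀ k, n ≤ k → u k ∈ S) :
    IsFragmentedFamily (Set.range u) := by
  have hhead : IsFragmentedFamily (u '' Set.Iio n) :=
    hF.isFragmentedFamily_of_finite (Set.image_subset_iff.mpr fun k _ => hu k)
      ((Set.finite_Iio n).image u)
  refine (hS.union hhead).mono ?_
  rintro _ ⟨k, rfl⟩
  rcases lt_or_ge k n with hk | hk
  · exact Or.inr ⟨k, hk, rfl⟩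
  · exact Or.inl (huS k hk)

theorem isFragmentedFamily_of_forall_exists_abs_sub_le {F : ℕ → Set (K → ℝ)}
    {G : Set (K → ℝ)} (hF : ∀ n, IsFragmentedFamily (F n)) {δ : ℕ → ℝ}
    (hδ : Tendsto δ atTop (𝓝 0)) (hG : ∀ n, ∀ g ∈ G, ∃ f ∈ F n, ∀ x, |g x - f x| ≤ δ n) :
    IsFragmentedFamily G := by
  intro T hT ε hε
  obtain ⟨n, hn⟩ := (hδ.eventually (gt_mem_nhds (by linarith : (0 : ℝ) < ε / 4))).exists
  obtain ⟨O, hO, hne, hosc⟩ := hF n T hT (ε / 2) (by linarith)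
  refine ⟨O, hO, hne, fun g hg x hx y hy => ?_⟩
  obtain ⟨f, hf, hgf⟩ := hG n g hg
  have hx' := abs_le.mp (hgf x)
  have hy' := abs_le.mp (hgf y)
  have hxy := abs_lt.mp (hosc f hf x hx y hy)
  rw [abs_lt]
  constructor <;> linarith

end Fragmented

theorem abs_add_smul_sub_le {K : Type*} (f : K → ℝ) {g : K → ℝ} (hg : ∀ x, |g x| ≤ 1)
    {c : ℝ} (hc : 0 ≤ c) (x : K) : |(f + c • g) x - f x| ≤ c := by
  simpa [abs_mul, abs_of_nonneg hc] using mul_le_mul_of_nonneg_left (hg x) hc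

theorem fragmented_hyperspace_intersection_general
    {K : Type*} [TopologicalSpace K]
    (A : ℕ → Set (K → ℝ)) :
    (((∀ n, IsFragmentedFamily (A n)) →
        IsFragmentedFamily
          (⋂ n : ℕ, {h : K → ℝ | ∃ f ∈ A n,
            ∃ g : K → ℝ, Continuous g ∧ (∀ x, |g x| ≤ 1) ∧
              h = f + ((1 : ℝ) / 2) ^ n • g}))) ∧
    ((∀ n, IsEventuallyFragmented (A n)) →
        IsEventuallyFragmented
          (⋂ n : ℕ, {h : K → ℝ | ∃ f ∈ A n,
            ∃ g : K → ℝ, Continuous g ∧ (∀ x, |g x| ≤ 1) ∧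
              h = f + ((1 : ℝ) / 2) ^ n • g})) := by
  have hδ : Tendsto (fun n : ℕ => ((1 : ℝ) / 2) ^ n) atTop (𝓝 0) :=
    tendsto_pow_atTop_nhds_zero_of_lt_one (by norm_num) (by norm_num)
  refine ⟨fun hfrag => isFragmentedFamily_of_forall_exists_abs_sub_le hfrag hδ ?_, ?_⟩
  · intro n h hh
    obtain ⟨f, hf, g, -, hg, rfl⟩ := Set.mem_iInter.mp hh n
    exact ⟨f, hf, abs_add_smul_sub_le f hg (by positivity)⟩
  · intro hev h hh
    choose F hF G _ hG hFG using fun n k => Set.mem_iInter.mp (hh k) n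
    obtain ⟨φ, hφ, hdiag⟩ := exists_strictMono_forall_ge_mem_range
      (fun n s => IsFragmentedFamily (Set.range fun k => F n (s k)))
      fun n s => hev n (fun k => F n (s k)) fun k => hF n (s k)
    refine ⟨φ, hφ, isFragmentedFamily_of_forall_exists_abs_sub_le
      (F := fun n => Set.range fun k => F n (φ k)) (fun n => ?_) hδ ?_⟩
    · obtain ⟨s, hs, htail⟩ := hdiag n
      refine (hev n).isFragmentedFamily_range (n := n) hs (fun k => hF n (φ k)) fun k hk => ?_
      obtain ⟨j, hj⟩ := htail k hk
      exact ⟨j, congrArg (F n) hj⟩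
    · rintro n _ ⟨k, rfl⟩
      refine ⟨F n (φ k), ⟨k, rfl⟩, ?_⟩
      simpa only [hFG n (φ k)] using abs_add_smul_sub_le _ (hG n (φ k)) (by positivity)

/-- Let `K` be compact Hausdorff, `(Aₙ)` families of bounded real-valued
functions on `K` and `B` the closed unit ball of `C(K)`.  If each `Aₙ` is fragmented
(resp. eventually fragmented), then so is `A := ⋂ₙ (Aₙ + 2⁻ⁿ·B)`. -/
theorem fragmented_hyperspace_intersection
    {K : Type*} [TopologicalSpace K] [CompactSpace K] [T2Space K]
    (A : ℕ → Set (K → ℝ))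
    (hbd : ∀ n, ∀ f ∈ A n, ∃ C : ℝ, ∀ x, |f x| ≤ C) :
    (((∀ n, IsFragmentedFamily (A n)) →
        IsFragmentedFamily
          (⋂ n : ℕ, {h : K → ℝ | ∃ f ∈ A n,
            ∃ g : K → ℝ, Continuous g ∧ (∀ x, |g x| ≤ 1) ∧
              h = f + ((1 : ℝ) / 2) ^ n • g}))) ∧
    ((∀ n, IsEventuallyFragmented (A n)) →
        IsEventuallyFragmented
          (⋂ n : ℕ, {h : K → ℝ | ∃ f ∈ A n,
            ∃ g : K → ℝ, Continuous g ∧ (∀ x, |g x| ≤ 1) ∧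
              h = f + ((1 : ℝ) / 2) ^ n • g})) :=
  fragmented_hyperspace_intersection_general A
end
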